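/- arXiv:1203.4436 — 2 statements merged into one kernel-verified Lean document; each statement's English description precedes it below -/
import Mathlib

section
/- Let κ, τ: I → ℝ be smooth with κ > 0 and κ² + τ² > 0, let (T, N, B) satisfy the Frenet equations T' = κN, N' = -κT + τB, B' = -τN, and suppose tan θ = ∓ (κ²+τ²)^{3/2}/(τ'κ - κ'τ) with τ'κ - κ'τ never zero. Then the vector field d = ∓ (τ/√(κ²+τ²)) sin θ T + cos θ N ∓ (κ/√(κ²+τ²)) sin θ B satisfies d' = 0, i.e. d is constant. -/
/-! The axis candidate `d = a T + cos θ N + c B` has, by the Frenet equations,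
derivative `(a' - κ cos θ) T + (κ a - τ c) N + (c' + τ cos θ) B`. The middle coefficient
vanishes because `(a, c)` is proportional to `(τ, κ)`, and the derivatives of the unit
vector `(τ, κ)/√(κ² + τ²)` are `(κ, -τ) (τ'κ - κ'τ)/(κ² + τ²)^{3/2}`; the choice of `θ`
is exactly what turns these into `κ cos θ` and `-τ cos θ`. -/

open Real

lemma Real.sqrt_pow_three {x : ℝ} (hx : 0 ≤ x) : √(x ^ 3) = √x ^ 3 := by
  rw [show x ^ 3 = (√x ^ 3) ^ 2 by rw [← pow_mul, mul_comm, pow_mul, sq_sqrt hx]]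
  exact sqrt_sq (by positivity)

lemma Real.sin_mul_eq_mul_cos_of_tan_eq {θ c w : ℝ} (hc : c ≠ 0) (hw : w ≠ 0)
    (htan : tan θ = c / w) : sin θ * w = c * cos θ := by
  have hcos : cos θ ≠ 0 := by
    intro h
    rw [tan_eq_sin_div_cos, h, div_zero] at htan
    exact div_ne_zero hc hw htan.symm
  rw [tan_eq_sin_div_cos, div_eq_div_iff hcos hw] at htan
  linarith

lemma HasDerivAt.div_sqrt_sq_add_sq {f g : ℝ → ℝ} {f' g' s : ℝ} (hf : HasDerivAt f f' s)
    (hg : HasDerivAt g g' s) (hpos : 0 < f s ^ 2 + g s ^ 2) :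
    HasDerivAt (fun u => f u / √(f u ^ 2 + g u ^ 2))
      (g s * (f' * g s - g' * f s) / √(f s ^ 2 + g s ^ 2) ^ 3) s := by
  have hr : 0 < √(f s ^ 2 + g s ^ 2) := sqrt_pos.mpr hpos
  have hr2 : √(f s ^ 2 + g s ^ 2) ^ 2 = f s ^ 2 + g s ^ 2 := sq_sqrt hpos.le
  have hrad := ((hf.pow 2).add (hg.pow 2)).sqrt hpos.ne'
  refine (hf.div hrad hr.ne').congr_deriv ?_
  simp only [Pi.add_apply, Pi.pow_apply, Nat.cast_ofNat, Nat.add_one_sub_one, pow_one]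
  field_simp
  linear_combination f' * hr2

lemma HasDerivAt.frenet_combination {E : Type*} [NormedAddCommGroup E] [NormedSpace ℝ E]
    {T N B : ℝ → E} {a b c : ℝ → ℝ} {κ τ a' b' c' s : ℝ}
    (hT : HasDerivAt T (κ • N s) s) (hN : HasDerivAt N (-κ • T s + τ • B s) s)
    (hB : HasDerivAt B (-τ • N s) s)
    (ha : HasDerivAt a a' s) (hb : HasDerivAt b b' s) (hc : HasDerivAt c c' s) :
    HasDerivAt (fun u => a u • T u + b u • N u + c u • B u)
      ((a' - κ * b s) • T s + (b' + κ * a s - τ * c s) • N s + (c' + τ * b s) • B s) s :=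
  ((ha.smul hT).add (hb.smul hN)).add (hc.smul hB) |>.congr_deriv (by module)

theorem slant_helix_axis_is_constant_general
    (I : Set ℝ)
    (T N B : ℝ → EuclideanSpace ℝ (Fin 3)) (κ τ κ' τ' : ℝ → ℝ)
    (hκτpos : ∀ s ∈ I, 0 < (κ s) ^ 2 + (τ s) ^ 2)
    (hT : ∀ s ∈ I, HasDerivAt T (κ s • N s) s)
    (hN : ∀ s ∈ I, HasDerivAt N (-(κ s) • T s + τ s • B s) s)
    (hB : ∀ s ∈ I, HasDerivAt B (-(τ s) • N s) s)
    (hκ' : ∀ s ∈ I, HasDerivAt κ (κ' s) s)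
    (hτ' : ∀ s ∈ I, HasDerivAt τ (τ' s) s)
    (hW : ∀ s ∈ I, τ' s * κ s - κ' s * τ s ≠ 0)
    (θ : ℝ) (ε : ℝ) (hε : ε = 1 ∨ ε = -1)
    (htan : ∀ s ∈ I, Real.tan θ
      = ε * Real.sqrt (((κ s) ^ 2 + (τ s) ^ 2) ^ 3) / (τ' s * κ s - κ' s * τ s)) :
    ∀ s ∈ I, HasDerivAt (fun u =>
      (ε * (τ u / Real.sqrt ((κ u) ^ 2 + (τ u) ^ 2)) * Real.sin θ) • T u
        + Real.cos θ • N u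
        + (ε * (κ u / Real.sqrt ((κ u) ^ 2 + (τ u) ^ 2)) * Real.sin θ) • B u)
      (0 : EuclideanSpace ℝ (Fin 3)) s := by
  intro s hs
  have hpos := hκτpos s hs
  set r := √(κ s ^ 2 + τ s ^ 2)
  have hr : 0 < r := sqrt_pos.mpr hpos
  have hε2 : ε ^ 2 = 1 := by rcases hε with rfl | rfl <;> norm_num
  have hkey : sin θ * (τ' s * κ s - κ' s * τ s) = ε * r ^ 3 * cos θ := by
    refine sin_mul_eq_mul_cos_of_tan_eq ?_ (hW s hs) ?_
    · exact mul_ne_zero (by rintro rfl; norm_num at hε2) (by positivity)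
    · rw [htan s hs, sqrt_pow_three hpos.le]
  have ha : HasDerivAt (fun u => ε * (τ u / √(κ u ^ 2 + τ u ^ 2)) * sin θ) (κ s * cos θ) s := by
    have hτr := (hτ' s hs).div_sqrt_sq_add_sq (hκ' s hs) (by linarith)
    simp only [add_comm (τ _ ^ 2) (κ _ ^ 2)] at hτr
    refine (hτr.const_mul ε).mul_const (sin θ) |>.congr_deriv ?_
    field_simp
    linear_combination ε * κ s * hkey + κ s * r ^ 3 * cos θ * hε2
  have hc : HasDerivAt (fun u => ε * (κ u / √(κ u ^ 2 + τ u ^ 2)) * sin θ)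
      (-(τ s * cos θ)) s := by
    refine (((hκ' s hs).div_sqrt_sq_add_sq (hτ' s hs) hpos).const_mul ε).mul_const
      (sin θ) |>.congr_deriv ?_
    field_simp
    linear_combination -(ε * τ s * hkey) - τ s * r ^ 3 * cos θ * hε2
  refine ((hT s hs).frenet_combination (hN s hs) (hB s hs) ha (hasDerivAt_const s (cos θ))
    hc).congr_deriv ?_
  module

/-- If `tan θ = ∓ (κ²+τ²)^{3/2}/(τ'κ - κ'τ)`, then the vector field
`d = ∓ (τ/√(κ²+τ²)) sin θ T + cos θ N ∓ (κ/√(κ²+τ²)) sin θ B` has vanishing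
derivative, i.e. it is constant. -/
theorem slant_helix_axis_is_constant
    (I : Set ℝ) (hI : IsOpen I)
    (T N B : ℝ → EuclideanSpace ℝ (Fin 3)) (κ τ κ' τ' : ℝ → ℝ)
    (hκpos : ∀ s ∈ I, 0 < κ s)
    (hκτpos : ∀ s ∈ I, 0 < (κ s) ^ 2 + (τ s) ^ 2)
    (hT : ∀ s ∈ I, HasDerivAt T (κ s • N s) s)
    (hN : ∀ s ∈ I, HasDerivAt N (-(κ s) • T s + τ s • B s) s)
    (hB : ∀ s ∈ I, HasDerivAt B (-(τ s) • N s) s)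
    (hκ' : ∀ s ∈ I, HasDerivAt κ (κ' s) s)
    (hτ' : ∀ s ∈ I, HasDerivAt τ (τ' s) s)
    (hW : ∀ s ∈ I, τ' s * κ s - κ' s * τ s ≠ 0)
    (θ : ℝ) (ε : ℝ) (hε : ε = 1 ∨ ε = -1)
    (htan : ∀ s ∈ I, Real.tan θ
      = ε * Real.sqrt (((κ s) ^ 2 + (τ s) ^ 2) ^ 3) / (τ' s * κ s - κ' s * τ s)) :
    ∀ s ∈ I, HasDerivAt (fun u =>
      (ε * (τ u / Real.sqrt ((κ u) ^ 2 + (τ u) ^ 2)) * Real.sin θ) • T u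
        + Real.cos θ • N u
        + (ε * (κ u / Real.sqrt ((κ u) ^ 2 + (τ u) ^ 2)) * Real.sin θ) • B u)
      (0 : EuclideanSpace ℝ (Fin 3)) s :=
  slant_helix_axis_is_constant_general I T N B κ τ κ' τ' hκτpos hT hN hB hκ' hτ' hW θ ε hε htan
end

section
/- Let α: I → ℝ³ be a unit speed curve with κ > 0, τ, and Frenet frame (T, N, B), and suppose there exist a unit vector d and constant θ ∈ (0, π) with ⟨N, d⟩ = cos θ. If additionally ⟨B, d⟩ is nowhere zero, then (τ'κ - κ'τ)/(κ²+τ²)^{3/2} = ∓ cot θ, a constant; in particular the function (τ'κ - κ'τ)/(κ²+τ²)^{3/2} is constant. -/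
/-!
Put `a = ⟨T, d⟩` and `c = ⟨B, d⟩`. Differentiating `⟨N, d⟩ = cos θ` gives `τ c = κ a`, and
differentiating this once more, with `a' = κ cos θ` and `c' = -τ cos θ`, gives
`c (τ'κ - κ'τ) = κ (κ² + τ²) cos θ`. Expanding `d` in the frame gives `a² + c² = sin² θ`, hence
`c² (κ² + τ²) = κ² sin² θ`. Since `c` is continuous and nowhere zero on the interval `I`, it has a
constant sign `ε`, so `ε c √(κ² + τ²) = κ sin θ`, and dividing the two identities gives
`(τ'κ - κ'τ) / (κ² + τ²)^{3/2} = ε cot θ`.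
-/

open Set Real
open scoped RealInnerProductSpace

theorem IsPreconnected.exists_sign_mul_pos {α : Type*} [TopologicalSpace α] {s : Set α}
    {f : α → ℝ} (hs : IsPreconnected s) (hf : ContinuousOn f s) (hf0 : ∀ x ∈ s, f x ≠ 0) :
    ∃ ε : ℝ, (ε = 1 ∨ ε = -1) ∧ ∀ x ∈ s, 0 < ε * f x := by
  rcases hs.mapsTo_Ioi_or_Iio hf hf0 with hpos | hneg
  · exact ⟨1, Or.inl rfl, fun x hx => by simpa using hpos hx⟩
  · exact ⟨-1, Or.inr rfl, fun x hx => by simpa using hneg hx⟩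

theorem div_sqrt_pow_three_eq {X c κ P C S ε : ℝ} (hε : ε = 1 ∨ ε = -1) (hc : 0 < ε * c)
    (hκ : 0 < κ) (hS : 0 < S) (hX : c * X = κ * P * C) (hP : c ^ 2 * P = κ ^ 2 * S ^ 2) :
    X / √(P ^ 3) = ε * (C / S) := by
  have hεc : ε * c = |c| := by
    rcases hε with rfl | rfl
    · rw [one_mul, abs_of_pos (by linarith)]
    · rw [neg_one_mul, abs_of_neg (by linarith)]
  have hc0 : c ≠ 0 := by rintro rfl; simp at hc
  have hPpos : 0 < P := pos_of_mul_pos_right (hP ▸ by positivity) (sq_nonneg c)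
  have hsqrtP : ε * c * √P = κ * S := by
    rw [hεc, ← sqrt_sq_eq_abs, ← sqrt_mul (sq_nonneg c), hP, ← mul_pow,
      sqrt_sq (by positivity)]
  have hP3 : √(P ^ 3) = P * √P := by
    rw [pow_succ, sqrt_mul (by positivity), sqrt_sq hPpos.le]
  have hXS : X * S = ε * C * (P * √P) := by
    apply mul_left_cancel₀ hc0
    linear_combination S * hX - C * P * hsqrtP
  rw [hP3, div_eq_iff (by positivity), mul_div_assoc', div_mul_eq_mul_div, eq_div_iff hS.ne',
    hXS]

variable {E : Type*} [NormedAddCommGroup E] [InnerProductSpace ℝ E]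

theorem HasDerivAt.inner_const {f : ℝ → E} {f' : E} {x : ℝ} (hf : HasDerivAt f f' x) (d : E) :
    HasDerivAt (fun t => ⟪f t, d⟫) ⟪f', d⟫ x := by
  simpa using hf.inner ℝ (hasDerivAt_const x d)

theorem HasDerivAt.unique_of_eqOn {f g : ℝ → ℝ} {f' g' : ℝ} {U : Set ℝ} {x : ℝ}
    (hU : IsOpen U) (hx : x ∈ U) (hfg : EqOn f g U) (hf : HasDerivAt f f' x)
    (hg : HasDerivAt g g' x) : f' = g' :=
  hf.unique (hg.congr_of_eventuallyEq (hfg.eventuallyEq_of_mem (hU.mem_nhds hx)))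

theorem norm_sq_eq_of_eq_sum_inner_smul {x y z v : E}
    (hv : v = ⟪x, v⟫ • x + ⟪y, v⟫ • y + ⟪z, v⟫ • z) :
    ‖v‖ ^ 2 = ⟪x, v⟫ ^ 2 + ⟪y, v⟫ ^ 2 + ⟪z, v⟫ ^ 2 := by
  rw [← real_inner_self_eq_norm_sq]
  nth_rewrite 1 [hv]
  simp only [inner_add_left, real_inner_smul_left]
  ring

section Frenet

variable {I : Set ℝ} {T N B : ℝ → E} {κ τ : ℝ → ℝ} {d : E} {C : ℝ} {s : ℝ}

theorem tau_mul_inner_binormal_eq (hI : IsOpen I)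
    (hN : ∀ s ∈ I, HasDerivAt N (-(κ s) • T s + τ s • B s) s)
    (hNd : ∀ s ∈ I, ⟪N s, d⟫ = C) (hs : s ∈ I) :
    τ s * ⟪B s, d⟫ = κ s * ⟪T s, d⟫ := by
  have h := HasDerivAt.unique_of_eqOn hI hs hNd ((hN s hs).inner_const d) (hasDerivAt_const s C)
  rw [inner_add_left, real_inner_smul_left, real_inner_smul_left] at h
  linarith

theorem inner_binormal_mul_eq (hI : IsOpen I)
    {κ' τ' : ℝ → ℝ} (hT : ∀ s ∈ I, HasDerivAt T (κ s • N s) s)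
    (hN : ∀ s ∈ I, HasDerivAt N (-(κ s) • T s + τ s • B s) s)
    (hB : ∀ s ∈ I, HasDerivAt B (-(τ s) • N s) s)
    (hκ' : ∀ s ∈ I, HasDerivAt κ (κ' s) s) (hτ' : ∀ s ∈ I, HasDerivAt τ (τ' s) s)
    (hNd : ∀ s ∈ I, ⟪N s, d⟫ = C) (hs : s ∈ I) :
    ⟪B s, d⟫ * (τ' s * κ s - κ' s * τ s) = κ s * (κ s ^ 2 + τ s ^ 2) * C := by
  have hbal : ∀ t ∈ I, τ t * ⟪B t, d⟫ = κ t * ⟪T t, d⟫ :=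
    fun t ht => tau_mul_inner_binormal_eq hI hN hNd ht
  have h := HasDerivAt.unique_of_eqOn hI hs hbal ((hτ' s hs).mul ((hB s hs).inner_const d))
    ((hκ' s hs).mul ((hT s hs).inner_const d))
  rw [real_inner_smul_left, real_inner_smul_left, hNd s hs] at h
  linear_combination κ s * h - κ' s * hbal s hs

theorem sq_inner_binormal_mul_eq (hI : IsOpen I)
    (hN : ∀ s ∈ I, HasDerivAt N (-(κ s) • T s + τ s • B s) s)
    (hspan : ∀ s ∈ I, ∀ v : E, v = ⟪T s, v⟫ • T s + ⟪N s, v⟫ • N s + ⟪B s, v⟫ • B s)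
    (hNd : ∀ s ∈ I, ⟪N s, d⟫ = C) (hs : s ∈ I) :
    ⟪B s, d⟫ ^ 2 * (κ s ^ 2 + τ s ^ 2) = κ s ^ 2 * (‖d‖ ^ 2 - C ^ 2) := by
  have hnorm := norm_sq_eq_of_eq_sum_inner_smul (hspan s hs d)
  rw [hNd s hs] at hnorm
  linear_combination (τ s * ⟪B s, d⟫ + κ s * ⟪T s, d⟫) * tau_mul_inner_binormal_eq hI hN hNd hs
    - κ s ^ 2 * hnorm

end Frenet

theorem slant_helix_sigma_constant_general
    (I : Set ℝ) (hI : IsOpen I)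
    (T N B : ℝ → EuclideanSpace ℝ (Fin 3)) (κ τ κ' τ' : ℝ → ℝ)
    (hκpos : ∀ s ∈ I, 0 < κ s)
    (hspan : ∀ s ∈ I, ∀ v : EuclideanSpace ℝ (Fin 3),
      v = (inner ℝ (T s) v : ℝ) • T s + (inner ℝ (N s) v : ℝ) • N s
        + (inner ℝ (B s) v : ℝ) • B s)
    (hT : ∀ s ∈ I, HasDerivAt T (κ s • N s) s)
    (hN : ∀ s ∈ I, HasDerivAt N (-(κ s) • T s + τ s • B s) s)
    (hB : ∀ s ∈ I, HasDerivAt B (-(τ s) • N s) s)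
    (hκ' : ∀ s ∈ I, HasDerivAt κ (κ' s) s)
    (hτ' : ∀ s ∈ I, HasDerivAt τ (τ' s) s)
    (d : EuclideanSpace ℝ (Fin 3)) (hd : ‖d‖ = 1)
    (θ : ℝ) (hθ0 : 0 < θ) (hθπ : θ < Real.pi)
    (hangle : ∀ s ∈ I, (inner ℝ (N s) d : ℝ) = Real.cos θ)
    (hBd : ∀ s ∈ I, (inner ℝ (B s) d : ℝ) ≠ 0)
    (hconv : Convex ℝ I) :
    ∃ ε : ℝ, (ε = 1 ∨ ε = -1) ∧ ∀ s ∈ I,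
      (τ' s * κ s - κ' s * τ s) / Real.sqrt (((κ s) ^ 2 + (τ s) ^ 2) ^ 3)
        = ε * (Real.cos θ / Real.sin θ) := by
  have hsin : 0 < sin θ := sin_pos_of_pos_of_lt_pi hθ0 hθπ
  have hBd_cont : ContinuousOn (fun s => ⟪B s, d⟫) I :=
    fun s hs => ((hB s hs).inner_const d).continuousAt.continuousWithinAt
  obtain ⟨ε, hε, hεB⟩ := hconv.isPreconnected.exists_sign_mul_pos hBd_cont hBd
  refine ⟨ε, hε, fun s hs => div_sqrt_pow_three_eq hε (hεB s hs) (hκpos s hs) hsin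
    (inner_binormal_mul_eq hI hT hN hB hκ' hτ' hangle hs) ?_⟩
  rw [sq_inner_binormal_mul_eq hI hN hspan hangle hs, hd, one_pow, ← sin_sq]

/-- For a unit speed slant helix with `⟨N, d⟩ = cos θ`, `θ ∈ (0, π)`
and `⟨B, d⟩` nowhere zero, the function `(τ'κ - κ'τ)/(κ²+τ²)^{3/2}` equals the
constant `∓ cot θ`. -/
theorem slant_helix_sigma_constant
    (I : Set ℝ) (hI : IsOpen I)
    (T N B : ℝ → EuclideanSpace ℝ (Fin 3)) (κ τ κ' τ' : ℝ → ℝ)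
    (hκpos : ∀ s ∈ I, 0 < κ s)
    (hTunit : ∀ s ∈ I, ‖T s‖ = 1) (hNunit : ∀ s ∈ I, ‖N s‖ = 1)
    (hBunit : ∀ s ∈ I, ‖B s‖ = 1)
    (hTN : ∀ s ∈ I, (inner ℝ (T s) (N s) : ℝ) = 0)
    (hTB : ∀ s ∈ I, (inner ℝ (T s) (B s) : ℝ) = 0)
    (hNB : ∀ s ∈ I, (inner ℝ (N s) (B s) : ℝ) = 0)
    (hspan : ∀ s ∈ I, ∀ v : EuclideanSpace ℝ (Fin 3),
      v = (inner ℝ (T s) v : ℝ) • T s + (inner ℝ (N s) v : ℝ) • N s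
        + (inner ℝ (B s) v : ℝ) • B s)
    (hT : ∀ s ∈ I, HasDerivAt T (κ s • N s) s)
    (hN : ∀ s ∈ I, HasDerivAt N (-(κ s) • T s + τ s • B s) s)
    (hB : ∀ s ∈ I, HasDerivAt B (-(τ s) • N s) s)
    (hκ' : ∀ s ∈ I, HasDerivAt κ (κ' s) s)
    (hτ' : ∀ s ∈ I, HasDerivAt τ (τ' s) s)
    (d : EuclideanSpace ℝ (Fin 3)) (hd : ‖d‖ = 1)
    (θ : ℝ) (hθ0 : 0 < θ) (hθπ : θ < Real.pi)
    (hangle : ∀ s ∈ I, (inner ℝ (N s) d : ℝ) = Real.cos θ)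
    (hBd : ∀ s ∈ I, (inner ℝ (B s) d : ℝ) ≠ 0)
    (hconv : Convex ℝ I) :
    ∃ ε : ℝ, (ε = 1 ∨ ε = -1) ∧ ∀ s ∈ I,
      (τ' s * κ s - κ' s * τ s) / Real.sqrt (((κ s) ^ 2 + (τ s) ^ 2) ^ 3)
        = ε * (Real.cos θ / Real.sin θ) :=
  slant_helix_sigma_constant_general I hI T N B κ τ κ' τ' hκpos hspan hT hN hB hκ' hτ' d hd θ hθ0
    hθπ hangle hBd hconv
end
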